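/- Let 0 < m ≤ L, p ≥ 1, and let H ∈ S(m,L,p) have global minimizer z⋆. Let T ∈ ℕ and let M̄ = (m̄_{ij})_{i,j=0,…,T} ∈ ℝ^{(T+1)×(T+1)} be doubly hyperdominant. For vectors y_0, …, y_T ∈ ℝ^p define w_k := ∇H(y_k + z⋆) − m y_k and u_k := (L − m) y_k − w_k for k = 0, …, T. Then Σ_{i=0}^{T} Σ_{j=0}^{T} m̄_{ij} ⟨w_i, u_j⟩ ≥ 0, where ⟨·,·⟩ is the Euclidean inner product on ℝ^p. -/

import Mathlib

noncomputable section

/-- The class `S(m,L,p)` of differentiable, `m`-strongly convex functions with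
`L`-Lipschitz gradient. -/
def SClass (m L : ℝ) (p : ℕ) : Set (EuclideanSpace ℝ (Fin p) → ℝ) :=
  {H | Differentiable ℝ H ∧
       ConvexOn ℝ Set.univ (fun x => H x - m / 2 * ‖x‖ ^ 2) ∧
       LipschitzWith L.toNNReal (fun x => gradient H x)}

/-- A square real matrix is doubly hyperdominant if its off-diagonal entries are
nonpositive and all row and column sums are nonnegative. -/
def DoublyHyperdominant {r : ℕ} (M : Matrix (Fin r) (Fin r) ℝ) : Prop :=
  (∀ i j, i ≠ j → M i j ≤ 0) ∧ (∀ i, 0 ≤ ∑ j, M i j) ∧ (∀ j, 0 ≤ ∑ i, M i j)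

open RealInnerProductSpace Set

section Aux

variable {E : Type*} [NormedAddCommGroup E] [InnerProductSpace ℝ E]

/-- A differentiable convex function lies above its tangent planes. -/
lemma aux_tangent (f : E → ℝ) (g : E → E) (hconv : ConvexOn ℝ Set.univ f)
    (hq : ∀ (x d : E) (t : ℝ), HasDerivAt (fun s : ℝ => f (x + s • d)) (⟪g (x + t • d), d⟫ : ℝ) t) :
    ∀ x y, f x + ⟪g x, y - x⟫ ≤ f y := by
  intro x y
  set d := y - x with hd
  have qconv : ConvexOn ℝ Set.univ (fun t : ℝ => f (x + t • d)) := by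
    have := hconv.comp_affineMap (AffineMap.lineMap x y : ℝ →ᵃ[ℝ] E)
    simp only [AffineMap.coe_lineMap, Set.preimage_univ] at this
    convert this using 2 with t
    iterate 4 rfl
    simp [AffineMap.lineMap_apply, hd]
    abel_nf
  have hslope := qconv.le_slope_of_hasDerivAt (mem_univ (0:ℝ)) (mem_univ (1:ℝ))
    zero_lt_one (hq x d 0)
  rw [slope_def_field] at hslope
  simp only [zero_smul, add_zero, one_smul] at hslope
  have h1 : x + d = y := by rw [hd]; abel
  rw [h1] at hslope
  have : ⟪g x, d⟫ ≤ f y - f x := by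
    field_simp at hslope
    linarith
  linarith

/-- Descent lemma from a one-sided monotonicity bound on the gradient. -/
lemma aux_descent (f : E → ℝ) (g : E → E) (S : ℝ) (hgc : Continuous g)
    (hq : ∀ (x d : E) (t : ℝ), HasDerivAt (fun s : ℝ => f (x + s • d)) (⟪g (x + t • d), d⟫ : ℝ) t)
    (hmono2 : ∀ a b, (⟪g a - g b, a - b⟫ : ℝ) ≤ S * ‖a - b‖ ^ 2) :
    ∀ x y, f y ≤ f x + ⟪g x, y - x⟫ + S / 2 * ‖y - x‖ ^ 2 := by
  intro x y
  set d := y - x with hd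
  set q' : ℝ → ℝ := fun t => ⟪g (x + t • d), d⟫ with hq'
  have hcont : Continuous q' := by
    apply Continuous.inner
    · exact hgc.comp (by continuity)
    · exact continuous_const
  have hftc : ∫ t in (0:ℝ)..1, q' t = f (x + (1:ℝ) • d) - f (x + (0:ℝ) • d) := by
    exact intervalIntegral.integral_eq_sub_of_hasDerivAt (fun t _ => hq x d t)
      (hcont.intervalIntegrable 0 1)
  have hbound : ∀ t ∈ Set.Icc (0:ℝ) 1, q' t ≤ ⟪g x, d⟫ + S * ‖d‖ ^ 2 * t := by
    intro t ht
    rcases eq_or_lt_of_le ht.1 with h0 | h0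
    · subst h0; simp [hq']
    · have key := hmono2 (x + t • d) x
      have h1 : x + t • d - x = t • d := by abel
      rw [h1] at key
      have h2 : (⟪g (x + t • d) - g x, t • d⟫ : ℝ) = t * ⟪g (x + t • d) - g x, d⟫ := by
        rw [real_inner_smul_right]
      have h3 : ‖t • d‖ ^ 2 = t ^ 2 * ‖d‖ ^ 2 := by
        rw [norm_smul]; simp [Real.norm_eq_abs, mul_pow, sq_abs]
      rw [h2, h3] at key
      have h4 : (⟪g (x + t • d) - g x, d⟫ : ℝ) ≤ S * ‖d‖ ^ 2 * t := by
        nlinarith [key, h0]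
      have h5 : q' t = ⟪g x, d⟫ + ⟪g (x + t • d) - g x, d⟫ := by
        simp [hq', inner_sub_left]
      linarith [h4, h5.le, h5.ge]
  have hint2 : ∫ t in (0:ℝ)..1, (⟪g x, d⟫ + S * ‖d‖ ^ 2 * t) = ⟪g x, d⟫ + S / 2 * ‖d‖ ^ 2 := by
    rw [intervalIntegral.integral_add (intervalIntegrable_const)
      ((intervalIntegral.intervalIntegrable_id).const_mul _)]
    rw [intervalIntegral.integral_const, intervalIntegral.integral_const_mul,
      integral_id]
    simp
    ring
  have hmono : ∫ t in (0:ℝ)..1, q' t ≤ ∫ t in (0:ℝ)..1, (⟪g x, d⟫ + S * ‖d‖ ^ 2 * t) := by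
    apply intervalIntegral.integral_mono_on zero_le_one (hcont.intervalIntegrable 0 1)
      (intervalIntegrable_const.add ((intervalIntegral.intervalIntegrable_id).const_mul _))
      hbound
  have h6 : x + (1:ℝ) • d = y := by rw [hd]; simp
  have h7 : x + (0:ℝ) • d = x := by simp
  rw [h6, h7] at hftc
  rw [hftc, hint2] at hmono
  linarith

/-- Key interpolation inequality for an `S`-smooth convex function. -/
lemma aux_star (f : E → ℝ) (g : E → E) (S : ℝ) (hS : 0 ≤ S)
    (htan : ∀ x y, f x + ⟪g x, y - x⟫ ≤ f y)
    (hdes : ∀ x y, f y ≤ f x + ⟪g x, y - x⟫ + S / 2 * ‖y - x‖ ^ 2)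
    (hconst : S = 0 → ∀ a b, g a = g b) :
    ∀ x y, ‖g y - g x‖ ^ 2 ≤ 2 * S * (f y - f x - ⟪g x, y - x⟫) := by
  intro x y
  rcases eq_or_lt_of_le hS with h0 | hSpos
  · rw [hconst h0.symm y x]
    simp [← h0]
  · set z : E := y - S⁻¹ • (g y - g x) with hz
    have h1 := htan x z
    have h2 := hdes y z
    have e1 : (⟪g x, z - x⟫ : ℝ) = ⟪g x, y - x⟫ - S⁻¹ * ⟪g x, g y - g x⟫ := by
      have : z - x = (y - x) - S⁻¹ • (g y - g x) := by rw [hz]; abel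
      rw [this, inner_sub_right, real_inner_smul_right]
    have e2 : (⟪g y, z - y⟫ : ℝ) = -(S⁻¹ * ⟪g y, g y - g x⟫) := by
      have : z - y = -(S⁻¹ • (g y - g x)) := by rw [hz]; abel
      rw [this, inner_neg_right, real_inner_smul_right]
    have e3 : ‖z - y‖ ^ 2 = S⁻¹ ^ 2 * ‖g y - g x‖ ^ 2 := by
      have : z - y = -(S⁻¹ • (g y - g x)) := by rw [hz]; abel
      rw [this, norm_neg, norm_smul]
      simp [mul_pow, Real.norm_eq_abs, sq_abs]
    have e4 : (⟪g y, g y - g x⟫ : ℝ) - ⟪g x, g y - g x⟫ = ‖g y - g x‖ ^ 2 := by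
      rw [← inner_sub_left, real_inner_self_eq_norm_sq]
    rw [e1] at h1
    rw [e2, e3] at h2
    have hSS : S * S⁻¹ = 1 := mul_inv_cancel₀ (ne_of_gt hSpos)
    have e5 : S / 2 * (S⁻¹ ^ 2 * ‖g y - g x‖ ^ 2) = 1 / 2 * (S⁻¹ * ‖g y - g x‖ ^ 2) := by
      field_simp
    have e6 : S⁻¹ * (⟪g y, g y - g x⟫ : ℝ) - S⁻¹ * (⟪g x, g y - g x⟫ : ℝ)
        = S⁻¹ * ‖g y - g x‖ ^ 2 := by rw [← e4]; ring
    have hc : S⁻¹ * ‖g y - g x‖ ^ 2 ≤ 2 * (f y - f x - ⟪g x, y - x⟫) := by linarith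
    have hfin := mul_le_mul_of_nonneg_left hc (le_of_lt hSpos)
    have e7 : S * (S⁻¹ * ‖g y - g x‖ ^ 2) = ‖g y - g x‖ ^ 2 := by
      rw [← mul_assoc, hSS, one_mul]
    linarith

end Aux

set_option maxHeartbeats 1600000

theorem stmt_4 (p : ℕ) (hp : 1 ≤ p) (m L : ℝ) (hm : 0 < m) (hmL : m ≤ L)
    (H : EuclideanSpace ℝ (Fin p) → ℝ) (hH : H ∈ SClass m L p)
    (zstar : EuclideanSpace ℝ (Fin p)) (hz : ∀ x, H zstar ≤ H x)
    (T : ℕ) (M : Matrix (Fin (T+1)) (Fin (T+1)) ℝ) (hM : DoublyHyperdominant M)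
    (y : Fin (T+1) → EuclideanSpace ℝ (Fin p))
    (w u : Fin (T+1) → EuclideanSpace ℝ (Fin p))
    (hw : ∀ k, w k = gradient H (y k + zstar) - m • y k)
    (hu : ∀ k, u k = (L - m) • y k - w k) :
    0 ≤ ∑ i, ∑ j, M i j * (inner ℝ (w i) (u j) : ℝ) := by
  obtain ⟨hdiff, hconvH, hlip⟩ := hH
  set G : EuclideanSpace ℝ (Fin p) → EuclideanSpace ℝ (Fin p) := fun v => gradient H v with hGdef
  set φ : EuclideanSpace ℝ (Fin p) → ℝ :=
    fun x => H (x + zstar) - H zstar - m / 2 * ‖x‖ ^ 2 with hφdef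
  set g : EuclideanSpace ℝ (Fin p) → EuclideanSpace ℝ (Fin p) :=
    fun x => G (x + zstar) - m • x with hgdef
  set S : ℝ := L - m with hSdef
  have hSnn : (0:ℝ) ≤ S := by rw [hSdef]; linarith
  have hLpos : (0:ℝ) < L := lt_of_lt_of_le hm hmL
  have hGlip : ∀ a b : EuclideanSpace ℝ (Fin p), ‖G a - G b‖ ≤ L * ‖a - b‖ := by
    intro a b
    have := hlip.dist_le_mul a b
    rwa [dist_eq_norm, dist_eq_norm, Real.coe_toNNReal _ hLpos.le] at this
  have hgrad0 : G zstar = 0 := by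
    have hmin : IsLocalMin H zstar := Filter.Eventually.of_forall hz
    have hf0 : fderiv ℝ H zstar = 0 := hmin.fderiv_eq_zero
    show gradient H zstar = 0
    rw [gradient, hf0, map_zero]
  have hfd : ∀ u : EuclideanSpace ℝ (Fin p),
      HasFDerivAt H (InnerProductSpace.toDual ℝ (EuclideanSpace ℝ (Fin p)) (G u)) u :=
    fun u => (hdiff u).hasGradientAt.hasFDerivAt
  have hq : ∀ (x d : EuclideanSpace ℝ (Fin p)) (t : ℝ),
      HasDerivAt (fun s : ℝ => φ (x + s • d)) (⟪g (x + t • d), d⟫ : ℝ) t := by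
    intro x d t
    have hcurve : HasDerivAt (fun s : ℝ => x + s • d) d t := by
      simpa using ((hasDerivAt_id t).smul_const d).const_add x
    have hcurve' : HasDerivAt (fun s : ℝ => x + s • d + zstar) d t := hcurve.add_const zstar
    have h1 : HasDerivAt (fun s : ℝ => H (x + s • d + zstar))
        (InnerProductSpace.toDual ℝ (EuclideanSpace ℝ (Fin p)) (G (x + t • d + zstar)) d) t :=
      (hfd (x + t • d + zstar)).comp_hasDerivAt t hcurve'
    have h2 : HasDerivAt (fun s : ℝ => (m / 2) * ‖x + s • d‖ ^ 2)
        ((m / 2) * (2 * ⟪x + t • d, d⟫)) t := (hcurve.norm_sq).const_mul (m / 2)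
    have h3 := (h1.sub_const (H zstar)).sub h2
    convert h3 using 1
    iterate 3 rfl
    rw [InnerProductSpace.toDual_apply_apply, hgdef]
    simp only [inner_sub_left, real_inner_smul_left]
    ring
  have hid : ∀ v : EuclideanSpace ℝ (Fin p), φ v = (H (v + zstar) - m / 2 * ‖v + zstar‖ ^ 2)
      + m * ⟪v, zstar⟫ + (m / 2 * ‖zstar‖ ^ 2 - H zstar) := by
    intro v
    have hn : ‖v + zstar‖ ^ 2 = ‖v‖ ^ 2 + 2 * ⟪v, zstar⟫ + ‖zstar‖ ^ 2 := norm_add_sq_real v zstar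
    rw [hφdef]; dsimp only; rw [hn]; ring
  have hconv : ConvexOn ℝ Set.univ φ := by
    refine ⟨convex_univ, ?_⟩
    intro x _ y _ a b ha hb hab
    have hc := hconvH.2 (mem_univ (x + zstar)) (mem_univ (y + zstar)) ha hb hab
    have hcomb : a • x + b • y + zstar = a • (x + zstar) + b • (y + zstar) := by
      calc a • x + b • y + zstar = a • x + b • y + (a + b) • zstar := by rw [hab, one_smul]
        _ = a • (x + zstar) + b • (y + zstar) := by module
    have hinner : (⟪a • x + b • y, zstar⟫ : ℝ) = a * ⟪x, zstar⟫ + b * ⟪y, zstar⟫ := by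
      rw [inner_add_left, real_inner_smul_left, real_inner_smul_left]
    have hK : a * (m / 2 * ‖zstar‖ ^ 2 - H zstar) + b * (m / 2 * ‖zstar‖ ^ 2 - H zstar)
        = (m / 2 * ‖zstar‖ ^ 2 - H zstar) := by rw [← add_mul, hab, one_mul]
    rw [hid (a • x + b • y), hid x, hid y, hcomb, hinner]
    simp only [smul_eq_mul] at hc ⊢
    nlinarith [hc, hK]
  -- tangent inequality
  have htan := aux_tangent φ g hconv hq
  -- continuity of g
  have hgc : Continuous g := by
    rw [hgdef]
    exact ((hlip.continuous).comp (continuous_id.add continuous_const)).sub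
      (continuous_const_smul m)
  -- one-sided monotonicity bound
  have hmono2 : ∀ a b : EuclideanSpace ℝ (Fin p), (⟪g a - g b, a - b⟫ : ℝ) ≤ S * ‖a - b‖ ^ 2 := by
    intro a b
    have hexp : g a - g b = (G (a + zstar) - G (b + zstar)) - m • (a - b) := by
      rw [hgdef]; dsimp only; rw [smul_sub]; abel
    have hcs : (⟪G (a + zstar) - G (b + zstar), a - b⟫ : ℝ)
        ≤ ‖G (a + zstar) - G (b + zstar)‖ * ‖a - b‖ := real_inner_le_norm _ _
    have hG : ‖G (a + zstar) - G (b + zstar)‖ ≤ L * ‖a - b‖ := by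
      have := hGlip (a + zstar) (b + zstar)
      have he : a + zstar - (b + zstar) = a - b := by abel
      rwa [he] at this
    have hsmul : (⟪m • (a - b), a - b⟫ : ℝ) = m * ‖a - b‖ ^ 2 := by
      rw [real_inner_smul_left, real_inner_self_eq_norm_sq]
    rw [hexp, inner_sub_left, hsmul, hSdef]
    nlinarith [hcs, hG, norm_nonneg (a - b)]
  -- descent lemma
  have hdes := aux_descent φ g S hgc hq hmono2
  -- constancy of g when S = 0
  have hconst : S = 0 → ∀ a b : EuclideanSpace ℝ (Fin p), g a = g b := by
    intro h0 a b
    have hLm : L = m := by rw [hSdef] at h0; linarith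
    have hmono1 : (0:ℝ) ≤ ⟪g a - g b, a - b⟫ := by
      have t1 := htan a b
      have t2 := htan b a
      have e : (⟪g a - g b, a - b⟫ : ℝ) = -⟪g a, b - a⟫ - ⟪g b, a - b⟫ := by
        rw [inner_sub_left]
        have : (⟪g a, a - b⟫ : ℝ) = -⟪g a, b - a⟫ := by
          rw [show a - b = -(b - a) by abel, inner_neg_right]
        rw [this]
      rw [e]; linarith
    have hexp : g a - g b = (G (a + zstar) - G (b + zstar)) - m • (a - b) := by
      rw [hgdef]; dsimp only; rw [smul_sub]; abel
    have hG : ‖G (a + zstar) - G (b + zstar)‖ ≤ m * ‖a - b‖ := by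
      have := hGlip (a + zstar) (b + zstar)
      have he : a + zstar - (b + zstar) = a - b := by abel
      rw [he, hLm] at this; exact this
    have hmono0 : m * ‖a - b‖ ^ 2 ≤ ⟪G (a + zstar) - G (b + zstar), a - b⟫ := by
      have : (⟪g a - g b, a - b⟫ : ℝ)
          = ⟪G (a + zstar) - G (b + zstar), a - b⟫ - m * ‖a - b‖ ^ 2 := by
        rw [hexp, inner_sub_left, real_inner_smul_left, real_inner_self_eq_norm_sq]
      linarith [hmono1, this.ge, this.le]
    have hnsq : ‖g a - g b‖ ^ 2 ≤ 0 := by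
      have hns : ‖g a - g b‖ ^ 2 = ‖G (a + zstar) - G (b + zstar)‖ ^ 2
          - 2 * ⟪G (a + zstar) - G (b + zstar), a - b⟫ * m + m ^ 2 * ‖a - b‖ ^ 2 := by
        rw [hexp]
        rw [norm_sub_sq_real, real_inner_smul_right, norm_smul]
        simp [Real.norm_eq_abs, mul_pow, sq_abs, abs_of_pos hm]
        ring
      nlinarith [hG, hmono0, norm_nonneg (a - b), norm_nonneg (G (a + zstar) - G (b + zstar)), hm]
    have : ‖g a - g b‖ = 0 := by nlinarith [norm_nonneg (g a - g b)]
    have := norm_eq_zero.mp this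
    exact sub_eq_zero.mp this
  -- key interpolation inequality
  have hstar := aux_star φ g S hSnn htan hdes hconst
  -- basic values at 0
  have hφ0 : φ 0 = 0 := by rw [hφdef]; simp
  have hg0 : g 0 = 0 := by rw [hgdef]; simp [hgrad0]
  clear_value G φ g S
  -- the separable bounds
  set c : Fin (T+1) → ℝ := fun i => S * ⟪g (y i), y i⟫ - S * φ (y i) - ‖g (y i)‖ ^ 2 / 2 with hcdef
  set d : Fin (T+1) → ℝ := fun j => S * φ (y j) - ‖g (y j)‖ ^ 2 / 2 with hddef
  clear_value c d
  have hwg : ∀ k, w k = g (y k) := by intro k; rw [hw k, hgdef, hGdef]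
  have hug : ∀ k, u k = S • y k - g (y k) := by intro k; rw [hu k, hwg k, hSdef]
  have hinner_wu : ∀ i j, (inner ℝ (w i) (u j) : ℝ) = S * ⟪g (y i), y j⟫ - ⟪g (y i), g (y j)⟫ := by
    intro i j
    rw [hwg i, hug j, inner_sub_right, real_inner_smul_right]
  have hcnn : ∀ i, 0 ≤ c i := by
    intro i
    have := hstar (y i) 0
    rw [hg0, hφ0] at this
    simp only [zero_sub, norm_neg, inner_neg_right, zero_sub] at this
    rw [hcdef]
    dsimp only
    nlinarith [this, sq_nonneg ‖g (y i)‖]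
  have hdnn : ∀ j, 0 ≤ d j := by
    intro j
    have := hstar 0 (y j)
    rw [hg0, hφ0] at this
    simp only [sub_zero, inner_zero_left] at this
    rw [hddef]
    dsimp only
    nlinarith [this, sq_nonneg ‖g (y j)‖]
  have hdiag : ∀ i, (inner ℝ (w i) (u i) : ℝ) = c i + d i := by
    intro i
    rw [hinner_wu i i, real_inner_self_eq_norm_sq, hcdef, hddef]
    dsimp only
    ring
  have hoff : ∀ i j, (inner ℝ (w i) (u j) : ℝ) ≤ c i + d j := by
    intro i j
    have hs := hstar (y i) (y j)
    have e1 : ‖g (y j) - g (y i)‖ ^ 2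
        = ‖g (y j)‖ ^ 2 - 2 * ⟪g (y j), g (y i)⟫ + ‖g (y i)‖ ^ 2 := norm_sub_sq_real _ _
    have e2 : (⟪g (y i), y j - y i⟫ : ℝ) = ⟪g (y i), y j⟫ - ⟪g (y i), y i⟫ :=
      inner_sub_right _ _ _
    have e3 : (⟪g (y j), g (y i)⟫ : ℝ) = ⟪g (y i), g (y j)⟫ := real_inner_comm _ _
    rw [e1, e2, e3] at hs
    rw [hinner_wu i j, hcdef, hddef]
    dsimp only
    nlinarith [hs, sq_nonneg ‖g (y i)‖, sq_nonneg ‖g (y j)‖]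
  -- combine with double hyperdominance
  obtain ⟨hoffdiag, hrow, hcol⟩ := hM
  have hstep : ∀ i j, M i j * (c i + d j) ≤ M i j * (inner ℝ (w i) (u j) : ℝ) := by
    intro i j
    rcases eq_or_ne i j with rfl | hne
    · rw [hdiag i]
    · exact mul_le_mul_of_nonpos_left (hoff i j) (hoffdiag i j hne)
  have hsum1 : (0:ℝ) ≤ ∑ i, ∑ j, M i j * (c i + d j) := by
    have hre : ∑ i, ∑ j, M i j * (c i + d j)
        = (∑ i, (∑ j, M i j) * c i) + (∑ j, (∑ i, M i j) * d j) :=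
      calc ∑ i, ∑ j, M i j * (c i + d j)
          = ∑ i, (∑ j, M i j * c i + ∑ j, M i j * d j) := by
            refine Finset.sum_congr rfl fun i _ => ?_
            rw [← Finset.sum_add_distrib]
            exact Finset.sum_congr rfl fun j _ => mul_add _ _ _
        _ = (∑ i, ∑ j, M i j * c i) + ∑ i, ∑ j, M i j * d j := Finset.sum_add_distrib
        _ = (∑ i, (∑ j, M i j) * c i) + ∑ j, ∑ i, M i j * d j := by
            refine congrArg₂ (· + ·) (Finset.sum_congr rfl fun i _ => ?_) Finset.sum_comm
            exact (Finset.sum_mul _ _ _).symm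
        _ = (∑ i, (∑ j, M i j) * c i) + ∑ j, (∑ i, M i j) * d j :=
            congrArg _ (Finset.sum_congr rfl fun j _ => (Finset.sum_mul _ _ _).symm)
    rw [hre]
    apply add_nonneg
    · exact Finset.sum_nonneg fun i _ => mul_nonneg (hrow i) (hcnn i)
    · exact Finset.sum_nonneg fun j _ => mul_nonneg (hcol j) (hdnn j)
  calc (0:ℝ) ≤ ∑ i, ∑ j, M i j * (c i + d j) := hsum1
    _ ≤ ∑ i, ∑ j, M i j * (inner ℝ (w i) (u j) : ℝ) :=
      Finset.sum_le_sum fun i _ => Finset.sum_le_sum fun j _ => hstep i j
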